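/- arXiv:1805.01462 — 2 statements merged into one kernel-verified Lean document; each statement's English description precedes it below -/
import Mathlib

section
/- For fixed x > 0 and α > -1, the function β ↦ H(β) = Γ(β+1) · μ(x, β, α) = ∫₀^∞ x^(t+α) t^β / Γ(t+α+1) dt is log-convex on (-1, ∞): for all β₁, β₂ > -1 and all λ ∈ [0, 1], one has H(λβ₁ + (1-λ)β₂) ≤ H(β₁)^λ · H(β₂)^(1-λ). -/
open MeasureTheory Real Set

/-- The Volterra function `μ(x, β, α) = ∫₀^∞ x^(t+α) t^β / (Γ(t+α+1) Γ(β+1)) dt`. -/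
noncomputable def volterraMu (x β α : ℝ) : ℝ :=
  ∫ t in Set.Ioi (0 : ℝ),
    x ^ (t + α) * t ^ β / (Real.Gamma (t + α + 1) * Real.Gamma (β + 1))

/-!
Write the integrand of `H(β) = Γ(β+1) μ(x, β, α)` as `w(t) t^β` with the positive weight
`w(t) = x^(t+α) / Γ(t+α+1)`. For `β = λβ₁ + (1-λ)β₂` it factors pointwise as
`(w t^β₁)^λ (w t^β₂)^(1-λ)`, so log-convexity is Hölder's inequality with exponents `1/λ` and
`1/(1-λ)`. Hölder needs the two endpoint integrals to be finite: `w` is bounded near `0`, and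
`Γ(s+1) ≥ M^s e^{-(M+1)}` with `M = e x` gives `w(t) = O(e^{-t})`, so `w(t) t^β` is dominated
by the integrand of `Γ(β+1)`.
-/

section Holder

variable {Ω : Type*} [MeasurableSpace Ω] {μ : Measure Ω} {f g : Ω → ℝ}

theorem MeasureTheory.Integrable.memLp_rpow_of_nonneg (hf : Integrable f μ) (hf0 : 0 ≤ᵐ[μ] f)
    {c : ℝ} (hc : 0 < c) : MemLp (fun ω => f ω ^ c) (ENNReal.ofReal (1 / c)) μ := by
  have h := (memLp_one_iff_integrable.2 hf).norm_rpow_div (ENNReal.ofReal c)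
  rw [ENNReal.toReal_ofReal hc.le, ← ENNReal.ofReal_one, ← ENNReal.ofReal_div_of_pos hc] at h
  refine h.ae_eq ?_
  filter_upwards [hf0] with ω hω
  rw [Real.norm_of_nonneg hω]

theorem integral_rpow_mul_rpow_le (hf : Integrable f μ) (hg : Integrable g μ)
    (hf0 : 0 ≤ᵐ[μ] f) (hg0 : 0 ≤ᵐ[μ] g) {a b : ℝ} (ha : 0 ≤ a) (hb : 0 ≤ b) (hab : a + b = 1) :
    ∫ ω, f ω ^ a * g ω ^ b ∂μ ≤ (∫ ω, f ω ∂μ) ^ a * (∫ ω, g ω ∂μ) ^ b := by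
  rcases ha.eq_or_lt with rfl | ha
  · obtain rfl : b = 1 := by linarith
    simp
  rcases hb.eq_or_lt with rfl | hb
  · obtain rfl : a = 1 := by linarith
    simp
  have rpow_nonneg_ae : ∀ {h : Ω → ℝ} (c : ℝ), 0 ≤ᵐ[μ] h → 0 ≤ᵐ[μ] fun ω => h ω ^ c :=
    fun c h0 => h0.mono fun ω hω => Real.rpow_nonneg hω c
  have integral_rpow_rpow : ∀ {h : Ω → ℝ} {c : ℝ}, 0 ≤ᵐ[μ] h → c ≠ 0 →
      ∫ ω, (h ω ^ c) ^ (1 / c) ∂μ = ∫ ω, h ω ∂μ := fun {h c} h0 hc =>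
    integral_congr_ae <| h0.mono fun ω (hω : 0 ≤ h ω) => by
      simp only [one_div, Real.rpow_rpow_inv hω hc]
  have holder := integral_mul_le_Lp_mul_Lq_of_nonneg (holderConjugate_one_div ha hb hab)
    (rpow_nonneg_ae a hf0) (rpow_nonneg_ae b hg0) (hf.memLp_rpow_of_nonneg hf0 ha)
    (hg.memLp_rpow_of_nonneg hg0 hb)
  rwa [integral_rpow_rpow hf0 ha.ne', integral_rpow_rpow hg0 hb.ne', one_div_one_div,
    one_div_one_div] at holder

end Holder

namespace Real

theorem rpow_mul_rpow_mul_rpow {w t a b p q : ℝ} (hw : 0 < w) (ht : 0 < t)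
    (hab : a + b = 1) :
    (w * t ^ p) ^ a * (w * t ^ q) ^ b = w * t ^ (a * p + b * q) := by
  rw [mul_rpow hw.le (rpow_nonneg ht.le _), mul_rpow hw.le (rpow_nonneg ht.le _),
    ← rpow_mul ht.le, ← rpow_mul ht.le, mul_mul_mul_comm, ← rpow_add hw, hab, rpow_one,
    ← rpow_add ht, mul_comm p, mul_comm q]

theorem rpow_mul_exp_neg_le_Gamma_add_one {s M : ℝ} (hs : 0 ≤ s) (hM : 0 ≤ M) :
    M ^ s * exp (-(M + 1)) ≤ Gamma (s + 1) := by
  have hsub : Ioc M (M + 1) ⊆ Ioi 0 := fun u hu => hM.trans_lt hu.1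
  have hint : IntegrableOn (fun u => exp (-u) * u ^ s) (Ioi 0) := by
    simpa using GammaIntegral_convergent (by linarith : 0 < s + 1)
  have hlow : ∀ u ∈ Ioc M (M + 1), M ^ s * exp (-(M + 1)) ≤ exp (-u) * u ^ s := fun u hu => by
    rw [mul_comm]
    gcongr
    · exact hu.2
    · exact hu.1.le
  rw [Gamma_eq_integral (by linarith), add_sub_cancel_right]
  calc M ^ s * exp (-(M + 1))
      ≤ ∫ u in Ioc M (M + 1), exp (-u) * u ^ s := by
        simpa using setIntegral_ge_of_const_le measurableSet_Ioc (by simp) hlow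
          (hint.mono_set hsub)
    _ ≤ ∫ u in Ioi 0, exp (-u) * u ^ s :=
        setIntegral_mono_set hint
          ((ae_restrict_iff' measurableSet_Ioi).2 (ae_of_all _ fun u (hu : 0 < u) => by positivity))
          hsub.eventuallyLE

theorem rpow_div_Gamma_add_one_le {x s : ℝ} (hx : 0 < x) (hs : 0 ≤ s) :
    x ^ s / Gamma (s + 1) ≤ exp (exp 1 * x + 1) * exp (-s) := by
  have hM : 0 < exp 1 * x := by positivity
  calc x ^ s / Gamma (s + 1)
      ≤ x ^ s / ((exp 1 * x) ^ s * exp (-(exp 1 * x + 1))) := by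
        gcongr
        exact rpow_mul_exp_neg_le_Gamma_add_one hs hM.le
    _ = exp (exp 1 * x + 1) * exp (-s) := by
        rw [mul_rpow (exp_pos 1).le hx.le, exp_one_rpow, exp_neg, exp_neg]
        have : x ^ s ≠ 0 := (rpow_pos_of_pos hx s).ne'
        field_simp

theorem rpow_div_Gamma_pos {x s : ℝ} (hx : 0 < x) (hs : 0 < s + 1) :
    0 < x ^ s / Gamma (s + 1) :=
  div_pos (rpow_pos_of_pos hx s) (Gamma_pos_of_pos hs)

theorem continuousOn_rpow_div_Gamma {x α : ℝ} (hx : x ≠ 0) :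
    ContinuousOn (fun t => x ^ (t + α) / Gamma (t + α + 1)) (Ioi (-1 - α)) := by
  have hpos : ∀ t ∈ Ioi (-1 - α), 0 < t + α + 1 := fun t (ht : -1 - α < t) => by linarith
  have hΓ : ContinuousOn (fun t => Gamma (t + α + 1)) (Ioi (-1 - α)) :=
    differentiableOn_Gamma_Ioi.continuousOn.comp (by fun_prop) hpos
  exact ((continuous_const.rpow (continuous_add_const α) fun _ => Or.inl hx).continuousOn).div hΓ
    fun t ht => (Gamma_pos_of_pos (hpos t ht)).ne'

theorem exists_rpow_div_Gamma_le_mul_exp_neg {x α : ℝ} (hx : 0 < x) (hα : -1 < α) :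
    ∃ C, ∀ t, 0 < t → x ^ (t + α) / Gamma (t + α + 1) ≤ C * exp (-t) := by
  obtain ⟨B, hB⟩ := isCompact_Icc.exists_bound_of_continuousOn <|
    (continuousOn_rpow_div_Gamma (α := α) hx.ne').mono
      fun t (ht : t ∈ Icc (0 : ℝ) 1) => show -1 - α < t by linarith [ht.1]
  refine ⟨max (B * exp 1) (exp (exp 1 * x + 1) * exp (-α)), fun t ht => ?_⟩
  rcases le_or_gt t 1 with ht1 | ht1
  · have hbound := hB t ⟨ht.le, ht1⟩
    calc x ^ (t + α) / Gamma (t + α + 1)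
        ≤ B := (le_abs_self _).trans hbound
      _ ≤ B * exp 1 * exp (-t) := by
        rw [mul_assoc, ← exp_add]
        exact le_mul_of_one_le_right ((abs_nonneg _).trans hbound) (one_le_exp (by linarith))
      _ ≤ _ := by gcongr; exact le_max_left _ _
  · calc x ^ (t + α) / Gamma (t + α + 1)
        ≤ exp (exp 1 * x + 1) * exp (-(t + α)) := rpow_div_Gamma_add_one_le hx (by linarith)
      _ = exp (exp 1 * x + 1) * exp (-α) * exp (-t) := by
        simp only [← exp_add]
        ring_nf
      _ ≤ _ := by gcongr; exact le_max_right _ _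

theorem integrableOn_rpow_div_Gamma_mul_rpow {x α β : ℝ} (hx : 0 < x) (hα : -1 < α)
    (hβ : -1 < β) : IntegrableOn (fun t => x ^ (t + α) / Gamma (t + α + 1) * t ^ β) (Ioi 0) := by
  obtain ⟨C, hC⟩ := exists_rpow_div_Gamma_le_mul_exp_neg hx hα
  have hdom : IntegrableOn (fun t => C * (exp (-t) * t ^ β)) (Ioi 0) := by
    have hΓ : IntegrableOn (fun t => exp (-t) * t ^ β) (Ioi 0) := by
      simpa using GammaIntegral_convergent (by linarith : 0 < β + 1)
    exact hΓ.const_mul C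
  have hcont : ContinuousOn (fun t => x ^ (t + α) / Gamma (t + α + 1) * t ^ β) (Ioi 0) :=
    ((continuousOn_rpow_div_Gamma hx.ne').mono
      fun t (ht : 0 < t) => show -1 - α < t by linarith).mul
      (continuousOn_of_forall_continuousAt fun t (ht : 0 < t) =>
        continuousAt_rpow_const _ _ (Or.inl ht.ne'))
  refine hdom.mono' (hcont.aestronglyMeasurable measurableSet_Ioi) <|
    (ae_restrict_iff' measurableSet_Ioi).2 (ae_of_all _ fun t (ht : 0 < t) => ?_)
  have hw := rpow_div_Gamma_pos hx (by linarith : 0 < t + α + 1)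
  rw [norm_of_nonneg (by positivity), ← mul_assoc]
  exact mul_le_mul_of_nonneg_right (hC t ht) (rpow_nonneg ht.le _)

end Real

noncomputable def volterraH (x α β : ℝ) : ℝ :=
  ∫ t in Ioi 0, x ^ (t + α) / Gamma (t + α + 1) * t ^ β

theorem Gamma_mul_volterraMu {x α β : ℝ} (h : Gamma (β + 1) ≠ 0) :
    Gamma (β + 1) * volterraMu x β α = volterraH x α β := by
  rw [volterraMu, volterraH, ← integral_const_mul]
  refine integral_congr_ae (ae_of_all _ fun t => ?_)
  dsimp only
  rw [mul_comm (Gamma (t + α + 1)), ← div_div, mul_div_assoc', mul_div_cancel₀ _ h]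
  ring

theorem volterraH_mul_add_mul_le {x α β₁ β₂ a b : ℝ} (hx : 0 < x) (hα : -1 < α)
    (hβ₁ : -1 < β₁) (hβ₂ : -1 < β₂) (ha : 0 ≤ a) (hb : 0 ≤ b) (hab : a + b = 1) :
    volterraH x α (a * β₁ + b * β₂) ≤ volterraH x α β₁ ^ a * volterraH x α β₂ ^ b := by
  have hw : ∀ t ∈ Ioi (0 : ℝ), 0 < x ^ (t + α) / Gamma (t + α + 1) := fun t (ht : 0 < t) =>
    rpow_div_Gamma_pos hx (by linarith)
  have hnonneg : ∀ β : ℝ, 0 ≤ᵐ[volume.restrict (Ioi 0)]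
      fun t => x ^ (t + α) / Gamma (t + α + 1) * t ^ β := fun β =>
    (ae_restrict_iff' measurableSet_Ioi).2 <| ae_of_all _ fun t ht =>
      mul_nonneg (hw t ht).le (rpow_nonneg (le_of_lt ht) β)
  calc volterraH x α (a * β₁ + b * β₂)
      = ∫ t in Ioi 0, (x ^ (t + α) / Gamma (t + α + 1) * t ^ β₁) ^ a *
          (x ^ (t + α) / Gamma (t + α + 1) * t ^ β₂) ^ b :=
        setIntegral_congr_fun measurableSet_Ioi fun t ht =>
          (rpow_mul_rpow_mul_rpow (hw t ht) ht hab).symm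
    _ ≤ volterraH x α β₁ ^ a * volterraH x α β₂ ^ b :=
        integral_rpow_mul_rpow_le (integrableOn_rpow_div_Gamma_mul_rpow hx hα hβ₁)
          (integrableOn_rpow_div_Gamma_mul_rpow hx hα hβ₂) (hnonneg β₁) (hnonneg β₂) ha hb hab

/-- For fixed `x > 0` and `α > -1`, `β ↦ H(β) = Γ(β+1) μ(x, β, α)` is log-convex on
`(-1, ∞)`. -/
theorem volterraMu_H_logConvex (x α : ℝ) (hx : 0 < x) (hα : -1 < α) :
    ∀ β₁ β₂ : ℝ, -1 < β₁ → -1 < β₂ → ∀ l : ℝ, l ∈ Set.Icc (0 : ℝ) 1 →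
      Real.Gamma (l * β₁ + (1 - l) * β₂ + 1) *
          volterraMu x (l * β₁ + (1 - l) * β₂) α ≤
        (Real.Gamma (β₁ + 1) * volterraMu x β₁ α) ^ l *
          (Real.Gamma (β₂ + 1) * volterraMu x β₂ α) ^ (1 - l) := by
  intro β₁ β₂ hβ₁ hβ₂ l ⟨hl0, hl1⟩
  have hΓ : ∀ β : ℝ, -1 < β → Gamma (β + 1) ≠ 0 := fun β hβ =>
    (Gamma_pos_of_pos (by linarith)).ne'
  have hβ : -1 < l * β₁ + (1 - l) * β₂ :=
    convex_Ioi (-1 : ℝ) hβ₁ hβ₂ hl0 (sub_nonneg.2 hl1) (add_sub_cancel l 1)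
  rw [Gamma_mul_volterraMu (hΓ _ hβ), Gamma_mul_volterraMu (hΓ _ hβ₁),
    Gamma_mul_volterraMu (hΓ _ hβ₂)]
  exact volterraH_mul_add_mul_le hx hα hβ₁ hβ₂ hl0 (sub_nonneg.2 hl1) (add_sub_cancel l 1)
end

section
/- For all α, β > -1 and x > 0, the double Turán-type inequality 0 ≤ μ(x, β+1, α)² − μ(x, β, α) · μ(x, β+2, α) ≤ μ(x, β+1, α)² / (β + 2) holds. -/
open MeasureTheory Real Set

/-!
With the weight `v(t) = x^(t+α) / Γ(t+α+1)` and its moments `M s = ∫₀^∞ t^s v(t) dt` we have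
`μ(x, b, α) = M b / Γ(b+1)`, so the upper bound is the Cauchy–Schwarz inequality
`M(β+1)² ≤ M β · M(β+2)` and the lower bound is `(β+1) M β · M(β+2) ≤ (β+2) M(β+1)²`.
Integration by parts gives `(s+1) M s = ∫₀^∞ t^(s+1) v(t) (ψ(t+α+1) - log x) dt`, where `ψ` is
the digamma function, so the lower bound is Chebyshev's integral inequality for the increasing
functions `t` and `ψ(t+α+1)` against the weight `t^(β+1) v(t)`; Cauchy–Schwarz is the same
inequality for `t` and `t` against `t^β v(t)`. Convexity of `log Γ` makes `ψ` increasing and, via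
its tangent lines, makes `v` decay exponentially, so that all moments are finite.
-/

open Filter Topology

theorem ConvexOn.add_mul_sub_le_of_hasDerivAt {S : Set ℝ} {f : ℝ → ℝ} {f' x y : ℝ}
    (hf : ConvexOn ℝ S f) (hx : x ∈ S) (hy : y ∈ S) (hd : HasDerivAt f f' x) :
    f x + f' * (y - x) ≤ f y := by
  rcases lt_trichotomy x y with hxy | rfl | hyx
  · have h := hf.le_slope_of_hasDerivAt hx hy hxy hd
    rw [slope_def_field, le_div_iff₀ (sub_pos.2 hxy)] at h
    linarith
  · simp
  · have h := hf.slope_le_of_hasDerivAt hy hx hyx hd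
    rw [slope_def_field, div_le_iff₀ (sub_pos.2 hyx)] at h
    linarith

theorem integral_mul_integral_le_of_monovaryOn {ι : Type*} [MeasurableSpace ι] {μ : Measure ι}
    [SFinite μ] {s : Set ι} {ρ f g : ι → ℝ} (hs : ∀ᵐ i ∂μ, i ∈ s) (hρ : ∀ i ∈ s, 0 ≤ ρ i)
    (hfg : MonovaryOn f g s) (hρi : Integrable ρ μ) (hρf : Integrable (fun i ↦ ρ i * f i) μ)
    (hρg : Integrable (fun i ↦ ρ i * g i) μ)
    (hρfg : Integrable (fun i ↦ ρ i * (f i * g i)) μ) :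
    (∫ i, ρ i * f i ∂μ) * ∫ i, ρ i * g i ∂μ ≤ (∫ i, ρ i ∂μ) * ∫ i, ρ i * (f i * g i) ∂μ := by
  have hpair : ∀ᵐ p ∂μ.prod μ, p.1 ∈ s ∧ p.2 ∈ s :=
    (Measure.quasiMeasurePreserving_fst.ae hs).and (Measure.quasiMeasurePreserving_snd.ae hs)
  have hnonneg : 0 ≤ ∫ p, ρ p.1 * ρ p.2 * ((f p.2 - f p.1) * (g p.2 - g p.1)) ∂μ.prod μ :=
    integral_nonneg_of_ae <| hpair.mono fun p ⟨h₁, h₂⟩ ↦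
      mul_nonneg (mul_nonneg (hρ _ h₁) (hρ _ h₂)) (hfg.sub_mul_sub_nonneg h₁ h₂)
  -- `∫∫ ρ i ρ j (f j - f i) (g j - g i) = 2 ((∫ ρ) (∫ ρ f g) - (∫ ρ f) (∫ ρ g))`
  have hexpand : (fun p : ι × ι ↦ ρ p.1 * ρ p.2 * ((f p.2 - f p.1) * (g p.2 - g p.1))) =
      fun p ↦ ρ p.1 * (ρ p.2 * (f p.2 * g p.2)) + ρ p.1 * (f p.1 * g p.1) * ρ p.2 -
        (ρ p.1 * f p.1 * (ρ p.2 * g p.2) + ρ p.1 * g p.1 * (ρ p.2 * f p.2)) := by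
    ext p; ring
  rw [hexpand, integral_sub ?_ ?_, integral_add (hρi.mul_prod hρfg) (hρfg.mul_prod hρi),
    integral_add (hρf.mul_prod hρg) (hρg.mul_prod hρf)] at hnonneg
  · rw [integral_prod_mul ρ (fun i ↦ ρ i * (f i * g i)),
      integral_prod_mul (fun i ↦ ρ i * (f i * g i)) ρ,
      integral_prod_mul (fun i ↦ ρ i * f i) (fun i ↦ ρ i * g i),
      integral_prod_mul (fun i ↦ ρ i * g i) (fun i ↦ ρ i * f i)] at hnonneg
    linarith
  · exact (hρi.mul_prod hρfg).add (hρfg.mul_prod hρi)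
  · exact (hρf.mul_prod hρg).add (hρg.mul_prod hρf)

namespace Real

noncomputable def digamma (x : ℝ) : ℝ := logDeriv Gamma x

theorem hasDerivAt_log_Gamma {x : ℝ} (hx : 0 < x) : HasDerivAt (log ∘ Gamma) (digamma x) x := by
  have hd : DifferentiableAt ℝ Gamma x :=
    differentiableAt_Gamma fun m ↦ ((neg_nonpos.2 m.cast_nonneg).trans_lt hx).ne'
  simpa only [digamma, logDeriv_apply, Function.comp_def] using
    hd.hasDerivAt.log (Gamma_pos_of_pos hx).ne'

theorem monotoneOn_digamma : MonotoneOn digamma (Ioi 0) := by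
  intro x hx y hy hxy
  rcases hxy.eq_or_lt with rfl | hxy
  · rfl
  exact (convexOn_log_Gamma.le_slope_of_hasDerivAt hx hy hxy (hasDerivAt_log_Gamma hx)).trans
    (convexOn_log_Gamma.slope_le_of_hasDerivAt hx hy hxy (hasDerivAt_log_Gamma hy))

theorem slope_log_Gamma_add_one {x : ℝ} (hx : 0 < x) : slope (log ∘ Gamma) x (x + 1) = log x := by
  rw [slope_def_field, Function.comp_apply, Function.comp_apply, Gamma_add_one hx.ne',
    log_mul hx.ne' (Gamma_pos_of_pos hx).ne']
  ring

theorem digamma_le_log {x : ℝ} (hx : 0 < x) : digamma x ≤ log x :=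
  slope_log_Gamma_add_one hx ▸ convexOn_log_Gamma.le_slope_of_hasDerivAt hx
    (mem_Ioi.2 (by linarith)) (lt_add_one x) (hasDerivAt_log_Gamma hx)

theorem log_le_digamma_add_one {x : ℝ} (hx : 0 < x) : log x ≤ digamma (x + 1) :=
  slope_log_Gamma_add_one hx ▸ convexOn_log_Gamma.slope_le_of_hasDerivAt hx
    (mem_Ioi.2 (by linarith)) (lt_add_one x) (hasDerivAt_log_Gamma (by linarith))

end Real

noncomputable def volterraWeight (x α t : ℝ) : ℝ :=
  exp ((t + α) * log x - log (Gamma (t + α + 1)))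

noncomputable def volterraMoment (x α s : ℝ) : ℝ :=
  ∫ t in Ioi 0, t ^ s * volterraWeight x α t

theorem volterraWeight_pos (x α t : ℝ) : 0 < volterraWeight x α t := exp_pos _

section VolterraWeight

variable {x α : ℝ}

theorem volterraWeight_eq (hx : 0 < x) {t : ℝ} (ht : 0 < t + α + 1) :
    volterraWeight x α t = x ^ (t + α) / Gamma (t + α + 1) := by
  rw [volterraWeight, exp_sub, exp_log (Gamma_pos_of_pos ht), rpow_def_of_pos hx, mul_comm]

theorem hasDerivAt_volterraWeight {t : ℝ} (ht : 0 < t + α + 1) :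
    HasDerivAt (volterraWeight x α)
      (volterraWeight x α t * (log x - digamma (t + α + 1))) t := by
  have hlin : HasDerivAt (fun t ↦ (t + α) * log x) (log x) t := by
    simpa using ((hasDerivAt_id t).add_const α).mul_const (log x)
  have hlogGamma : HasDerivAt (fun t ↦ log (Gamma (t + α + 1))) (digamma (t + α + 1)) t := by
    simpa [Function.comp_def] using
      (hasDerivAt_log_Gamma ht).comp t (((hasDerivAt_id t).add_const α).add_const 1)
  exact (hlin.sub hlogGamma).exp

theorem continuousAt_volterraWeight {t : ℝ} (ht : 0 < t + α + 1) :
    ContinuousAt (volterraWeight x α) t :=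
  (hasDerivAt_volterraWeight ht).continuousAt

theorem exists_volterraWeight_le_exp_neg (hα : -1 < α) :
    ∃ C, ∀ t, 0 ≤ t → volterraWeight x α t ≤ C * exp (-t) := by
  -- the tangent line of the convex `log ∘ Gamma` at `u` has slope `digamma u ≥ log x + 1`
  set u := exp (log x + 1) + 1
  have hu : 0 < u := by positivity
  have hslope : log x + 1 ≤ digamma u := by
    simpa using log_le_digamma_add_one (exp_pos (log x + 1))
  refine ⟨exp (α * log x - log (Gamma u) - digamma u * (α + 1 - u)), fun t ht ↦ ?_⟩
  have htangent := convexOn_log_Gamma.add_mul_sub_le_of_hasDerivAt hu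
    (mem_Ioi.2 (by linarith : 0 < t + α + 1)) (hasDerivAt_log_Gamma hu)
  rw [volterraWeight, ← exp_add, exp_le_exp]
  simp only [Function.comp_apply] at htangent
  nlinarith

end VolterraWeight

section VolterraMoment

variable {x α β : ℝ}

theorem continuousOn_rpow_mul_volterraWeight (hα : -1 < α) (s : ℝ) :
    ContinuousOn (fun t ↦ t ^ s * volterraWeight x α t) (Ioi 0) := fun t ht ↦
  ((continuousAt_rpow_const t s (Or.inl (ne_of_gt ht))).mul
    (continuousAt_volterraWeight (by linarith [mem_Ioi.1 ht]))).continuousWithinAt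

theorem integrableOn_rpow_mul_volterraWeight (hα : -1 < α) {s : ℝ} (hs : -1 < s) :
    IntegrableOn (fun t ↦ t ^ s * volterraWeight x α t) (Ioi 0) := by
  obtain ⟨C, hC⟩ := exists_volterraWeight_le_exp_neg (x := x) hα
  have hmajorant : IntegrableOn (fun t ↦ C * (exp (-t) * t ^ (s + 1 - 1))) (Ioi 0) :=
    (GammaIntegral_convergent (by linarith)).const_mul C
  refine hmajorant.mono' ((continuousOn_rpow_mul_volterraWeight hα s).aestronglyMeasurable
    measurableSet_Ioi) ((ae_restrict_mem measurableSet_Ioi).mono fun t (ht : 0 < t) ↦ ?_)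
  have hts : 0 ≤ t ^ s := rpow_nonneg ht.le s
  rw [norm_of_nonneg (mul_nonneg hts (volterraWeight_pos x α t).le), add_sub_cancel_right]
  nlinarith [hC t ht.le]

theorem tendsto_rpow_mul_volterraWeight_atTop (hα : -1 < α) (s : ℝ) :
    Tendsto (fun t ↦ t ^ s * volterraWeight x α t) atTop (𝓝 0) := by
  obtain ⟨C, hC⟩ := exists_volterraWeight_le_exp_neg (x := x) hα
  have hmajorant : Tendsto (fun t ↦ C * (t ^ s * exp (-t))) atTop (𝓝 0) := by
    simpa using (tendsto_rpow_mul_exp_neg_mul_atTop_nhds_zero s 1 one_pos).const_mul C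
  refine squeeze_zero' ?_ ?_ hmajorant <;> filter_upwards [eventually_gt_atTop 0] with t ht
  · exact mul_nonneg (rpow_nonneg ht.le s) (volterraWeight_pos x α t).le
  · have hts : 0 ≤ t ^ s := rpow_nonneg ht.le s
    nlinarith [hC t ht.le]

theorem monotoneOn_digamma_add_sub_log (hα : -1 < α) :
    MonotoneOn (fun t ↦ digamma (t + α + 1) - log x) (Ioi 0) :=
  fun t (ht : 0 < t) u (hu : 0 < u) htu ↦ by
    simpa using monotoneOn_digamma (mem_Ioi.2 (by linarith : 0 < t + α + 1))
      (mem_Ioi.2 (by linarith : 0 < u + α + 1)) (by linarith)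

theorem integrableOn_rpow_mul_volterraWeight_mul_digamma_sub_log (hα : -1 < α) {s : ℝ}
    (hs : -1 < s) :
    IntegrableOn (fun t ↦ t ^ s * volterraWeight x α t * (digamma (t + α + 1) - log x))
      (Ioi 0) := by
  set A := |digamma (α + 1)| + |α| + |log x|
  have hmajorant : IntegrableOn (fun t ↦ A * (t ^ s * volterraWeight x α t) +
      t ^ (s + 1) * volterraWeight x α t) (Ioi 0) :=
    ((integrableOn_rpow_mul_volterraWeight hα hs).const_mul A).add
      (integrableOn_rpow_mul_volterraWeight hα (by linarith))
  have hdigamma : AEStronglyMeasurable (fun t ↦ digamma (t + α + 1) - log x)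
      (volume.restrict (Ioi 0)) :=
    (aemeasurable_restrict_of_monotoneOn measurableSet_Ioi
      (monotoneOn_digamma_add_sub_log hα)).aestronglyMeasurable
  refine hmajorant.mono' (((continuousOn_rpow_mul_volterraWeight hα s).aestronglyMeasurable
    measurableSet_Ioi).mul hdigamma) ((ae_restrict_mem measurableSet_Ioi).mono
      fun t (ht : 0 < t) ↦ ?_)
  have hlower := monotoneOn_digamma (mem_Ioi.2 (by linarith : 0 < α + 1))
    (mem_Ioi.2 (by linarith : 0 < t + α + 1)) (by linarith)
  have hupper := (digamma_le_log (by linarith : 0 < t + α + 1)).trans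
    (log_le_sub_one_of_pos (by linarith))
  have hbound : |digamma (t + α + 1) - log x| ≤ A + t := by
    rw [abs_le]
    constructor <;> linarith [neg_abs_le (digamma (α + 1)), le_abs_self (digamma (α + 1)),
      neg_abs_le α, le_abs_self α, neg_abs_le (log x), le_abs_self (log x)]
  have hweight : 0 ≤ t ^ s * volterraWeight x α t :=
    mul_nonneg (rpow_nonneg ht.le s) (volterraWeight_pos x α t).le
  rw [norm_mul, norm_of_nonneg hweight, norm_eq_abs, rpow_add_one ht.ne']
  nlinarith

theorem add_one_mul_volterraMoment (hα : -1 < α) {s : ℝ} (hs : -1 < s) :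
    (s + 1) * volterraMoment x α s =
      ∫ t in Ioi 0, t ^ (s + 1) * volterraWeight x α t * (digamma (t + α + 1) - log x) := by
  have hint := integrableOn_rpow_mul_volterraWeight (x := x) hα hs
  have hint' := integrableOn_rpow_mul_volterraWeight_mul_digamma_sub_log (x := x) hα
    (by linarith : -1 < s + 1)
  have hderiv : ∀ t ∈ Ioi (0 : ℝ), HasDerivAt (fun t ↦ t ^ (s + 1) * volterraWeight x α t)
      ((s + 1) * (t ^ s * volterraWeight x α t) -
        t ^ (s + 1) * volterraWeight x α t * (digamma (t + α + 1) - log x)) t := by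
    intro t (ht : 0 < t)
    refine ((hasDerivAt_rpow_const (p := s + 1) (Or.inl ht.ne')).mul
      (hasDerivAt_volterraWeight (x := x) (by linarith : 0 < t + α + 1))).congr_deriv ?_
    rw [add_sub_cancel_right]
    ring
  have hcont : ContinuousWithinAt (fun t ↦ t ^ (s + 1) * volterraWeight x α t) (Ici 0) 0 :=
    ((continuousAt_rpow_const 0 (s + 1) (Or.inr (by linarith))).mul
      (continuousAt_volterraWeight (by linarith))).continuousWithinAt
  have hibp := integral_Ioi_of_hasDerivAt_of_tendsto hcont hderiv
    ((hint.const_mul (s + 1)).sub hint') (tendsto_rpow_mul_volterraWeight_atTop hα (s + 1))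
  rw [integral_sub (hint.const_mul (s + 1)) hint', integral_const_mul,
    zero_rpow (by linarith), zero_mul, sub_zero] at hibp
  rw [volterraMoment]
  linarith

theorem volterraMoment_sq_le_mul (hα : -1 < α) (hβ : -1 < β) :
    volterraMoment x α (β + 1) ^ 2 ≤ volterraMoment x α β * volterraMoment x α (β + 2) := by
  have hmul : EqOn (fun t ↦ t ^ β * volterraWeight x α t * t)
      (fun t ↦ t ^ (β + 1) * volterraWeight x α t) (Ioi 0) := fun t (ht : 0 < t) ↦ by
    dsimp only
    rw [rpow_add_one ht.ne']
    ring
  have hmul₂ : EqOn (fun t ↦ t ^ β * volterraWeight x α t * (t * t))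
      (fun t ↦ t ^ (β + 2) * volterraWeight x α t) (Ioi 0) := fun t (ht : 0 < t) ↦ by
    dsimp only
    rw [show β + 2 = β + 1 + 1 by ring, rpow_add_one ht.ne', rpow_add_one ht.ne']
    ring
  have hint₁ := (integrableOn_rpow_mul_volterraWeight (x := x) hα (by linarith : -1 < β + 1))
    |>.congr_fun hmul.symm measurableSet_Ioi
  have hchebyshev := integral_mul_integral_le_of_monovaryOn (ae_restrict_mem measurableSet_Ioi)
    (fun t (ht : 0 < t) ↦ mul_nonneg (rpow_nonneg ht.le β) (volterraWeight_pos x α t).le)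
    (monovaryOn_self (fun t ↦ t) _) (integrableOn_rpow_mul_volterraWeight hα hβ) hint₁ hint₁
    ((integrableOn_rpow_mul_volterraWeight hα (by linarith : -1 < β + 2)).congr_fun
      hmul₂.symm measurableSet_Ioi)
  rw [setIntegral_congr_fun measurableSet_Ioi hmul,
    setIntegral_congr_fun measurableSet_Ioi hmul₂] at hchebyshev
  simpa only [volterraMoment, sq] using hchebyshev

theorem mul_volterraMoment_mul_le (hα : -1 < α) (hβ : -1 < β) :
    (β + 1) * (volterraMoment x α β * volterraMoment x α (β + 2)) ≤
      (β + 2) * volterraMoment x α (β + 1) ^ 2 := by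
  have hmul : EqOn (fun t ↦ t ^ (β + 1) * volterraWeight x α t * t)
      (fun t ↦ t ^ (β + 2) * volterraWeight x α t) (Ioi 0) := fun t (ht : 0 < t) ↦ by
    dsimp only
    rw [show β + 2 = β + 1 + 1 by ring, rpow_add_one ht.ne' (β + 1)]
    ring
  have hmul₂ : EqOn
      (fun t ↦ t ^ (β + 1) * volterraWeight x α t * (t * (digamma (t + α + 1) - log x)))
      (fun t ↦ t ^ (β + 1 + 1) * volterraWeight x α t * (digamma (t + α + 1) - log x))
      (Ioi 0) := fun t (ht : 0 < t) ↦ by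
    dsimp only
    rw [rpow_add_one ht.ne' (β + 1)]
    ring
  have hchebyshev := integral_mul_integral_le_of_monovaryOn (ae_restrict_mem measurableSet_Ioi)
    (fun t (ht : 0 < t) ↦ mul_nonneg (rpow_nonneg ht.le _) (volterraWeight_pos x α t).le)
    (MonotoneOn.monovaryOn (f := fun t ↦ t) monotoneOn_id (monotoneOn_digamma_add_sub_log hα))
    (integrableOn_rpow_mul_volterraWeight hα (by linarith : -1 < β + 1))
    ((integrableOn_rpow_mul_volterraWeight hα (by linarith : -1 < β + 2)).congr_fun
      hmul.symm measurableSet_Ioi)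
    (integrableOn_rpow_mul_volterraWeight_mul_digamma_sub_log hα (by linarith : -1 < β + 1))
    ((integrableOn_rpow_mul_volterraWeight_mul_digamma_sub_log hα
      (by linarith : -1 < β + 1 + 1)).congr_fun hmul₂.symm measurableSet_Ioi)
  beta_reduce at hchebyshev
  rw [setIntegral_congr_fun measurableSet_Ioi hmul,
    setIntegral_congr_fun measurableSet_Ioi hmul₂, ← add_one_mul_volterraMoment hα hβ,
    ← add_one_mul_volterraMoment hα (by linarith : -1 < β + 1)] at hchebyshev
  rw [← volterraMoment, ← volterraMoment] at hchebyshev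
  linarith

end VolterraMoment

section VolterraMu

variable {x α β : ℝ}

theorem volterraMu_eq_volterraMoment_div (hx : 0 < x) (hα : -1 < α) (b : ℝ) :
    volterraMu x b α = volterraMoment x α b / Gamma (b + 1) := by
  rw [volterraMu, volterraMoment, ← integral_div]
  refine setIntegral_congr_fun measurableSet_Ioi fun t (ht : 0 < t) ↦ ?_
  rw [volterraWeight_eq hx (by linarith)]
  ring

theorem volterraMoment_eq_Gamma_mul_volterraMu (hx : 0 < x) (hα : -1 < α) {b : ℝ}
    (hb : -1 < b) : volterraMoment x α b = Gamma (b + 1) * volterraMu x b α := by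
  rw [volterraMu_eq_volterraMoment_div hx hα,
    mul_div_cancel₀ _ (Gamma_pos_of_pos (by linarith)).ne']

theorem volterraMu_mul_le_sq (hx : 0 < x) (hα : -1 < α) (hβ : -1 < β) :
    volterraMu x β α * volterraMu x (β + 2) α ≤ volterraMu x (β + 1) α ^ 2 := by
  have hmoment := mul_volterraMoment_mul_le (x := x) hα hβ
  rw [volterraMoment_eq_Gamma_mul_volterraMu hx hα hβ,
    volterraMoment_eq_Gamma_mul_volterraMu hx hα (by linarith : -1 < β + 1),
    volterraMoment_eq_Gamma_mul_volterraMu hx hα (by linarith : -1 < β + 2),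
    show β + 2 + 1 = β + 1 + 1 + 1 by ring, Gamma_add_one (by linarith : β + 1 + 1 ≠ 0),
    Gamma_add_one (by linarith : β + 1 ≠ 0)] at hmoment
  have hpos : 0 < (β + 1) ^ 2 * (β + 2) * Gamma (β + 1) ^ 2 :=
    mul_pos (mul_pos (pow_pos (by linarith) 2) (by linarith))
      (pow_pos (Gamma_pos_of_pos (by linarith)) 2)
  exact le_of_mul_le_mul_left (by linear_combination hmoment) hpos

theorem add_one_mul_volterraMu_sq_le (hx : 0 < x) (hα : -1 < α) (hβ : -1 < β) :
    (β + 1) * volterraMu x (β + 1) α ^ 2 ≤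
      (β + 2) * (volterraMu x β α * volterraMu x (β + 2) α) := by
  have hmoment := volterraMoment_sq_le_mul (x := x) hα hβ
  rw [volterraMoment_eq_Gamma_mul_volterraMu hx hα hβ,
    volterraMoment_eq_Gamma_mul_volterraMu hx hα (by linarith : -1 < β + 1),
    volterraMoment_eq_Gamma_mul_volterraMu hx hα (by linarith : -1 < β + 2),
    show β + 2 + 1 = β + 1 + 1 + 1 by ring, Gamma_add_one (by linarith : β + 1 + 1 ≠ 0),
    Gamma_add_one (by linarith : β + 1 ≠ 0)] at hmoment
  have hpos : 0 < (β + 1) * Gamma (β + 1) ^ 2 :=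
    mul_pos (by linarith) (pow_pos (Gamma_pos_of_pos (by linarith)) 2)
  exact le_of_mul_le_mul_left (by linear_combination hmoment) hpos

end VolterraMu

/-- Double Turán type inequality in the parameter `β`. -/
theorem volterraMu_turan_beta (x α β : ℝ) (hx : 0 < x) (hα : -1 < α) (hβ : -1 < β) :
    0 ≤ volterraMu x (β + 1) α ^ 2 - volterraMu x β α * volterraMu x (β + 2) α ∧
    volterraMu x (β + 1) α ^ 2 - volterraMu x β α * volterraMu x (β + 2) α ≤
      volterraMu x (β + 1) α ^ 2 / (β + 2) := by
  have hturan := volterraMu_mul_le_sq hx hα hβ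
  have hcauchySchwarz := add_one_mul_volterraMu_sq_le hx hα hβ
  refine ⟨sub_nonneg.2 hturan, ?_⟩
  rw [le_div_iff₀ (by linarith)]
  linarith
end
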